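/- arXiv:1311.4852 — 2 statements merged into one kernel-verified Lean document; each statement's English description precedes it below -/
import Mathlib

section
/- For every k ≥ 1, every 2k-edge-connected finite simple graph contains k pairwise edge-disjoint spanning trees. -/
open SimpleGraph

/-!
Take `k` edge-disjoint forests in `G` with the largest total number of edges, and call an edge of
`G` exchangeable if some sequence of exchanges (put an edge `xy` lying in no forest into a forest
`F`, and delete from `F` an edge of its `x`–`y` path) removes it from every forest. By maximality
the ends of an edge outside all forests are joined in every forest, and the joining path consists
of exchangeable edges; tracing exchanges backwards, every forest therefore spans each component of
the graph `Γ` of exchangeable edges. If `Γ` had `p ≥ 2` components, each forest would contain at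
most `p - 1` edges between components, and every edge of `G` between components lies in some
forest, so there would be at most `k (p - 1)` such edges; but `2k`-edge-connectivity puts at least
`2k` edges on the boundary of each component, hence at least `k p` in total. So `Γ` is connected
and every forest is a spanning tree.
-/

/-- `G` contains `k` pairwise edge-disjoint spanning trees: spanning subgraphs that are
connected and acyclic, with pairwise disjoint edge sets. -/
def HasEdgeDisjointSpanningTrees {V : Type*} (G : SimpleGraph V) (k : ℕ) : Prop :=
  ∃ T : Fin k → SimpleGraph V,
    (∀ i, T i ≤ G ∧ (T i).IsTree) ∧
    Pairwise fun i j => Disjoint (T i).edgeSet (T j).edgeSet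

/-- `G` is `m`-edge-connected: `G` is connected and remains connected after the removal
of any fewer than `m` edges. -/
def IsEdgeConnected {V : Type*} (G : SimpleGraph V) (m : ℕ) : Prop :=
  G.Connected ∧ ∀ S : Finset (Sym2 V), ↑S ⊆ G.edgeSet → S.card < m →
    (G.deleteEdges ↑S).Connected

namespace SimpleGraph

variable {V α : Type*}

theorem Reachable.of_forall_adj_reachable {G H : SimpleGraph V}
    (h : ∀ ⦃u v⦄, G.Adj u v → H.Reachable u v) {u v : V} (huv : G.Reachable u v) :
    H.Reachable u v := by
  rw [reachable_iff_reflTransGen] at huv ⊢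
  exact huv.lift' id fun a b hab => (reachable_iff_reflTransGen a b).mp (h hab)

theorem IsAcyclic.not_reachable_deleteEdges {G : SimpleGraph V} (hG : G.IsAcyclic) {x y : V}
    {p : G.Walk x y} (hp : p.IsPath) {e : Sym2 V} (he : e ∈ p.edges) :
    ¬(G.deleteEdges {e}).Reachable x y := by
  classical
  rintro ⟨q⟩
  have hpq : p = q.bypass.mapLe (deleteEdges_le _) :=
    congrArg Subtype.val <| (hG.subsingleton_path x y).elim ⟨p, hp⟩
      ⟨_, q.bypass_isPath.mapLe (deleteEdges_le _)⟩
  rw [hpq, Walk.edges_mapLe_eq_edges] at he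
  simpa using q.bypass.edges_subset_edgeSet he

theorem IsAcyclic.card_edgeSet_add_one_le [Finite V] [Nonempty V] {G : SimpleGraph V}
    (hG : G.IsAcyclic) : Nat.card G.edgeSet + 1 ≤ Nat.card V := by
  obtain ⟨T, hGT, -, hT, hreach⟩ :=
    (⊤ : SimpleGraph V).exists_isAcyclic_reachable_eq_le_of_le_of_isAcyclic le_top hG
  have hTree : T.IsTree :=
    ⟨(connected_iff _).mpr ⟨fun u v => hreach ▸ (connected_top.preconnected u v), ‹_›⟩, hT⟩
  have := Fintype.ofFinite V
  classical
  calc Nat.card G.edgeSet + 1 ≤ Nat.card T.edgeSet + 1 :=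
        by gcongr; exact Nat.card_mono (Set.toFinite _) (edgeSet_mono hGT)
    _ = Nat.card V := by
        rw [Nat.card_eq_fintype_card, Nat.card_eq_fintype_card, ← edgeFinset_card,
          hTree.card_edgeFinset]

theorem card_le_card_edgeSet_add_card_connectedComponent [Finite V] (G : SimpleGraph V) :
    Nat.card V ≤ Nat.card G.edgeSet + Nat.card G.ConnectedComponent := by
  cases isEmpty_or_nonempty V
  · simp
  choose rep hrep using fun c : G.ConnectedComponent => c.exists_rep
  let c₀ := G.connectedComponentMk (Classical.arbitrary V)
  -- one extra edge per component other than `c₀` makes `G` connected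
  let star : Set (Sym2 V) := (fun c => s(rep c₀, rep c)) '' {c₀}ᶜ
  have hconn : (G ⊔ fromEdgeSet star).Connected := by
    have hroot : ∀ u, (G ⊔ fromEdgeSet star).Reachable (rep c₀) u := by
      intro u
      have hu : (G ⊔ fromEdgeSet star).Reachable (rep (G.connectedComponentMk u)) u :=
        (ConnectedComponent.exact (hrep _)).mono le_sup_left
      refine Reachable.trans ?_ hu
      by_cases hc : G.connectedComponentMk u = c₀
      · rw [hc]
      · refine Adj.reachable (Or.inr ((fromEdgeSet_adj _).mpr ⟨⟨_, hc, rfl⟩, ?_⟩))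
        intro h
        exact hc (by rw [← hrep (G.connectedComponentMk u), ← h, hrep])
    exact (connected_iff _).mpr ⟨fun u v => (hroot u).symm.trans (hroot v), ‹_›⟩
  have hstar : star.ncard + 1 ≤ Nat.card G.ConnectedComponent := by
    have := Set.ncard_add_ncard_compl {c₀}
    rw [Set.ncard_singleton] at this
    have : star.ncard ≤ ({c₀}ᶜ : Set _).ncard := Set.ncard_image_le (Set.toFinite _)
    omega
  have hedges : Nat.card (G ⊔ fromEdgeSet star).edgeSet ≤ Nat.card G.edgeSet + star.ncard := by
    rw [Nat.card_coe_set_eq, Nat.card_coe_set_eq, edgeSet_sup, edgeSet_fromEdgeSet]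
    exact (Set.ncard_union_le _ _).trans
      (by gcongr; exacts [Set.toFinite _, Set.sdiff_subset])
  have := hconn.card_vert_le_card_edgeSet_add_one
  omega

theorem card_connectedComponent_le_of_reachable [Finite V] {G H : SimpleGraph V}
    (h : ∀ ⦃u v⦄, G.Reachable u v → H.Reachable u v) :
    Nat.card H.ConnectedComponent ≤ Nat.card G.ConnectedComponent :=
  Nat.card_le_card_of_surjective
    (ConnectedComponent.lift H.connectedComponentMk fun _ _ p _ =>
      ConnectedComponent.sound (h p.reachable))
    fun c => c.ind fun v => ⟨G.connectedComponentMk v, rfl⟩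

theorem IsAcyclic.ncard_edgeSet_sdiff_add_one_le [Finite V] [Nonempty V] {F H : SimpleGraph V}
    (hF : F.IsAcyclic) (hHF : H ≤ F) :
    (F.edgeSet \ H.edgeSet).ncard + 1 ≤ Nat.card H.ConnectedComponent := by
  have h₁ := hF.card_edgeSet_add_one_le
  have h₂ := H.card_le_card_edgeSet_add_card_connectedComponent
  have h₃ := Set.ncard_sdiff_add_ncard_of_subset (edgeSet_mono hHF) (Set.toFinite F.edgeSet)
  simp only [Nat.card_coe_set_eq] at h₁ h₂
  omega

def crossingEdges (G : SimpleGraph V) (f : V → α) : Set (Sym2 V) :=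
  {e ∈ G.edgeSet | ¬(e.map f).IsDiag}

theorem isDiag_map_connectedComponentMk {G : SimpleGraph V} {e : Sym2 V} (he : e ∈ G.edgeSet) :
    (e.map G.connectedComponentMk).IsDiag := by
  induction e using Sym2.ind with
  | _ u v => simpa using ConnectedComponent.connectedComponentMk_eq_of_adj he

theorem sum_ncard_crossingEdges_mem [Finite V] [Fintype α] (G : SimpleGraph V) (f : V → α) :
    ∑ a, {e ∈ G.crossingEdges f | a ∈ e.map f}.ncard = 2 * (G.crossingEdges f).ncard := by
  classical
  set X := (Set.toFinite (G.crossingEdges f)).toFinset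
  have hX : ∀ a, {e ∈ G.crossingEdges f | a ∈ e.map f}.ncard =
      ∑ e ∈ X, if a ∈ e.map f then 1 else 0 := by
    intro a
    rw [Finset.sum_boole, Nat.cast_id, ← Set.ncard_coe_finset]
    congr 1
    ext e
    simp [X]
  simp_rw [hX]
  rw [Finset.sum_comm, Set.ncard_eq_toFinset_card _ (Set.toFinite _), mul_comm]
  refine Finset.sum_const_nat fun e he => ?_
  rw [Finset.sum_boole, Nat.cast_id,
    ← (e.map f).card_toFinset_of_not_isDiag (by simp_all [X, crossingEdges])]
  congr 1
  ext a
  simp [Sym2.mem_toFinset]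

end SimpleGraph

theorem IsEdgeConnected.le_ncard_crossingEdges_mem {V α : Type*} [Finite V]
    {G : SimpleGraph V} {m : ℕ} (hG : _root_.IsEdgeConnected G m) (f : V → α) {a : α} {u v : V}
    (hu : f u = a) (hv : f v ≠ a) :
    m ≤ {e ∈ G.crossingEdges f | a ∈ e.map f}.ncard := by
  by_contra! hlt
  set B := {e ∈ G.crossingEdges f | a ∈ e.map f}
  have hBfin : B.Finite := Set.toFinite B
  obtain ⟨p⟩ := (hG.2 hBfin.toFinset (by rw [Set.Finite.coe_toFinset]; exact fun e he => he.1.1)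
    (by rwa [← Set.ncard_eq_toFinset_card _ hBfin])).preconnected u v
  obtain ⟨d, -, hd₁, hd₂⟩ := p.exists_boundary_dart {w | f w = a} hu hv
  obtain ⟨hadj, hnot⟩ := (deleteEdges_adj ..).mp d.adj
  rw [Set.mem_ofPred_eq] at hd₁ hd₂
  refine hnot (hBfin.mem_toFinset.mpr ⟨⟨hadj, ?_⟩, by simp [hd₁]⟩)
  simpa [hd₁] using Ne.symm hd₂

theorem IsEdgeConnected.mul_card_le_two_mul_ncard_crossingEdges {V α : Type*} [Finite V]
    [Fintype α] {G : SimpleGraph V} {m : ℕ} (hG : _root_.IsEdgeConnected G m) {f : V → α}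
    (hf : Function.Surjective f) (hα : 1 < Fintype.card α) :
    m * Fintype.card α ≤ 2 * (G.crossingEdges f).ncard := by
  rw [← G.sum_ncard_crossingEdges_mem f, mul_comm, ← smul_eq_mul, ← Finset.card_univ,
    ← Finset.sum_const]
  refine Finset.sum_le_sum fun a _ => ?_
  obtain ⟨b, hb⟩ := Fintype.exists_ne_of_one_lt_card hα a
  obtain ⟨u, hu⟩ := hf a
  obtain ⟨v, hv⟩ := hf b
  exact hG.le_ncard_crossingEdges_mem f hu (hv ▸ hb)

namespace SimpleGraph

variable {V ι : Type*} {G : SimpleGraph V} {F F' : ι → SimpleGraph V}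

def IsForestPacking (G : SimpleGraph V) (F : ι → SimpleGraph V) : Prop :=
  (∀ i, F i ≤ G ∧ (F i).IsAcyclic) ∧ Pairwise fun i j => Disjoint (F i).edgeSet (F j).edgeSet

def IsMaxForestPacking [Fintype ι] (G : SimpleGraph V) (F : ι → SimpleGraph V) : Prop :=
  IsForestPacking G F ∧
    ∀ F' : ι → SimpleGraph V, IsForestPacking G F' →
      ∑ i, (F' i).edgeSet.ncard ≤ ∑ i, (F i).edgeSet.ncard

theorem exists_isMaxForestPacking [Finite V] [Fintype ι] (G : SimpleGraph V) :
    ∃ F : ι → SimpleGraph V, IsMaxForestPacking G F := by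
  have : Nonempty {F : ι → SimpleGraph V // IsForestPacking G F} :=
    ⟨⟨fun _ => ⊥, fun _ => ⟨bot_le, isAcyclic_bot⟩, fun _ _ _ => by simp⟩⟩
  obtain ⟨F, hF⟩ := Finite.exists_max fun F : {F : ι → SimpleGraph V // IsForestPacking G F} =>
    ∑ i, (F.1 i).edgeSet.ncard
  exact ⟨F.1, F.2, fun F' hF' => hF ⟨F', hF'⟩⟩

theorem ncard_edgeSet_sup_edge [Finite V] {H : SimpleGraph V} {x y : V} (hne : x ≠ y)
    (hxy : s(x, y) ∉ H.edgeSet) : (H ⊔ edge x y).edgeSet.ncard = H.edgeSet.ncard + 1 := by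
  have : (H ⊔ edge x y).edgeSet = insert s(x, y) H.edgeSet := by
    ext e
    rcases eq_or_ne e s(x, y) with rfl | he <;> simp [*]
  rw [this, Set.ncard_insert_of_notMem hxy (Set.toFinite _)]

theorem sum_ncard_edgeSet_update [Fintype ι] [DecidableEq ι] (F : ι → SimpleGraph V) (i : ι)
    (H : SimpleGraph V) :
    ∑ j, (Function.update F i H j).edgeSet.ncard + (F i).edgeSet.ncard =
      ∑ j, (F j).edgeSet.ncard + H.edgeSet.ncard := by
  simp_rw [Function.apply_update (fun (_ : ι) (H : SimpleGraph V) => H.edgeSet.ncard)]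
  rw [Finset.sum_update_of_mem (Finset.mem_univ i),
    Finset.sum_eq_sum_sdiff_singleton_add (Finset.mem_univ i)]
  ring

theorem IsForestPacking.update_sup_edge [DecidableEq ι] (hF : IsForestPacking G F) {i : ι}
    {H : SimpleGraph V} (hHF : H ≤ F i) {x y : V} (hxy : G.Adj x y)
    (hmiss : ∀ j, s(x, y) ∉ (F j).edgeSet) (hH : ¬H.Reachable x y) :
    IsForestPacking G (Function.update F i (H ⊔ edge x y)) := by
  have hsub : (H ⊔ edge x y).edgeSet ⊆ (F i).edgeSet ∪ {s(x, y)} := by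
    rw [edgeSet_sup]
    exact Set.union_subset_union (edgeSet_mono hHF) edgeSet_edge_subset
  have hdisj : ∀ j ≠ i, Disjoint (H ⊔ edge x y).edgeSet (F j).edgeSet := fun j hj =>
    Set.disjoint_of_subset_left hsub <| Set.disjoint_union_left.mpr
      ⟨hF.2 hj.symm, Set.disjoint_singleton_left.mpr (hmiss j)⟩
  refine ⟨fun j => ?_, fun j l hjl => ?_⟩
  · rcases eq_or_ne j i with rfl | hj
    · rw [Function.update_self]
      exact ⟨sup_le (hHF.trans (hF.1 j).1) ((edge_le_iff G).mpr (.inr hxy)),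
        ((hF.1 j).2.anti hHF).sup_edge_of_not_reachable hH⟩
    · rw [Function.update_of_ne hj]
      exact hF.1 j
  · by_cases hj : j = i <;> by_cases hl : l = i
    · exact absurd (hj.trans hl.symm) hjl
    · subst hj
      simpa [Function.update_of_ne hl] using hdisj l hl
    · subst hl
      simpa [Function.update_of_ne hj] using (hdisj j hj).symm
    · simpa [Function.update_of_ne hj, Function.update_of_ne hl] using hF.2 hjl

theorem IsMaxForestPacking.reachable [Finite V] [Fintype ι] [DecidableEq ι]
    (hF : IsMaxForestPacking G F) {x y : V} (hxy : G.Adj x y)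
    (hmiss : ∀ j, s(x, y) ∉ (F j).edgeSet) (i : ι) : (F i).Reachable x y := by
  by_contra hr
  have hmax := hF.2 _ (hF.1.update_sup_edge le_rfl hxy hmiss hr)
  have hsum := sum_ncard_edgeSet_update F i (F i ⊔ edge x y)
  rw [ncard_edgeSet_sup_edge hxy.ne (hmiss i)] at hsum
  omega

def ExchangeStep (G : SimpleGraph V) [DecidableEq ι] (F F' : ι → SimpleGraph V) : Prop :=
  ∃ i x y e, G.Adj x y ∧ (∀ j, s(x, y) ∉ (F j).edgeSet) ∧ e ∈ (F i).edgeSet ∧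
    ¬((F i).deleteEdges {e}).Reachable x y ∧
    F' = Function.update F i ((F i).deleteEdges {e} ⊔ edge x y)

theorem IsMaxForestPacking.of_exchangeStep [Finite V] [Fintype ι] [DecidableEq ι]
    (hF : IsMaxForestPacking G F) (h : ExchangeStep G F F') : IsMaxForestPacking G F' := by
  obtain ⟨i, x, y, e, hxy, hmiss, he, hr, rfl⟩ := h
  have hsum := sum_ncard_edgeSet_update F i ((F i).deleteEdges {e} ⊔ edge x y)
  rw [ncard_edgeSet_sup_edge hxy.ne fun h => hmiss i (edgeSet_mono (deleteEdges_le _) h),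
    edgeSet_deleteEdges, Set.ncard_sdiff_singleton_add_one he] at hsum
  refine ⟨hF.1.update_sup_edge (deleteEdges_le _) hxy hmiss hr, fun F'' hF'' => ?_⟩
  have := hF.2 F'' hF''
  omega

theorem IsMaxForestPacking.of_reflTransGen [Finite V] [Fintype ι] [DecidableEq ι]
    (hF : IsMaxForestPacking G F) (h : Relation.ReflTransGen (ExchangeStep G) F F') :
    IsMaxForestPacking G F' := by
  induction h with
  | refl => exact hF
  | tail _ hstep ih => exact ih.of_exchangeStep hstep

def exchangeGraph (G : SimpleGraph V) [DecidableEq ι] (F : ι → SimpleGraph V) : SimpleGraph V :=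
  fromEdgeSet {e ∈ G.edgeSet |
    ∃ F', Relation.ReflTransGen (ExchangeStep G) F F' ∧ ∀ j, e ∉ (F' j).edgeSet}

section Exchange

variable [Finite V] [Fintype ι] [DecidableEq ι] {F₀ : ι → SimpleGraph V}

theorem IsMaxForestPacking.reachable_inf_exchangeGraph_of_missing
    (hF₀ : IsMaxForestPacking G F₀) (hF : Relation.ReflTransGen (ExchangeStep G) F₀ F)
    {x y : V} (hxy : G.Adj x y) (hmiss : ∀ j, s(x, y) ∉ (F j).edgeSet) (i : ι) :
    (F i ⊓ exchangeGraph G F₀).Reachable x y := by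
  have hFmax := hF₀.of_reflTransGen hF
  obtain ⟨p, hp⟩ := (hFmax.reachable hxy hmiss i).exists_isPath
  refine ⟨p.transfer _ fun e he => ?_⟩
  -- every edge `e` of this path can be swapped for `s(x, y)`, which removes it from all forests
  have heF := p.edges_subset_edgeSet he
  have hstep : ExchangeStep G F (Function.update F i ((F i).deleteEdges {e} ⊔ edge x y)) :=
    ⟨i, x, y, e, hxy, hmiss, heF, (hFmax.1.1 i).2.not_reachable_deleteEdges hp he, rfl⟩
  rw [edgeSet_inf, exchangeGraph, edgeSet_fromEdgeSet]
  refine ⟨heF, ⟨edgeSet_mono (hFmax.1.1 i).1 heF, _, hF.tail hstep, fun j => ?_⟩,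
    G.not_isDiag_of_mem_edgeSet (edgeSet_mono (hFmax.1.1 i).1 heF)⟩
  rcases eq_or_ne j i with rfl | hj
  · rw [Function.update_self, edgeSet_sup, edgeSet_deleteEdges]
    rintro (⟨-, he'⟩ | he')
    · exact he' rfl
    · exact hmiss j (edgeSet_edge_subset he' ▸ heF)
  · rw [Function.update_of_ne hj]
    exact Set.disjoint_left.mp (hFmax.1.2 hj.symm) heF

theorem IsMaxForestPacking.reachable_inf_exchangeGraph_of_exchangeStep
    (hF₀ : IsMaxForestPacking G F₀) (hF : Relation.ReflTransGen (ExchangeStep G) F₀ F)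
    (hFF' : ExchangeStep G F F') (i : ι) {u v : V}
    (huv : (F' i ⊓ exchangeGraph G F₀).Reachable u v) :
    (F i ⊓ exchangeGraph G F₀).Reachable u v := by
  obtain ⟨i₀, x, y, e, hxy, hmiss, -, -, rfl⟩ := hFF'
  refine huv.of_forall_adj_reachable fun a b hab => ?_
  rw [inf_adj] at hab
  rcases eq_or_ne i i₀ with rfl | hi
  · rw [Function.update_self] at hab
    obtain ⟨hab | hab, hΓ⟩ := hab
    · exact Adj.reachable ⟨((deleteEdges_adj ..).mp hab).1, hΓ⟩
    · have := hF₀.reachable_inf_exchangeGraph_of_missing hF hxy hmiss i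
      rcases (edge_adj ..).mp hab with ⟨⟨rfl, rfl⟩ | ⟨rfl, rfl⟩, -⟩
      exacts [this, this.symm]
  · rw [Function.update_of_ne hi] at hab
    exact Adj.reachable hab

theorem IsMaxForestPacking.reachable_inf_exchangeGraph_of_reflTransGen
    (hF₀ : IsMaxForestPacking G F₀) (hF : Relation.ReflTransGen (ExchangeStep G) F₀ F)
    (i : ι) {u v : V} (huv : (F i ⊓ exchangeGraph G F₀).Reachable u v) :
    (F₀ i ⊓ exchangeGraph G F₀).Reachable u v := by
  induction hF with
  | refl => exact huv
  | tail hF hstep ih =>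
    exact ih (hF₀.reachable_inf_exchangeGraph_of_exchangeStep hF hstep i huv)

theorem IsMaxForestPacking.reachable_inf_exchangeGraph (hF₀ : IsMaxForestPacking G F₀) (i : ι)
    {u v : V} (huv : (exchangeGraph G F₀).Reachable u v) :
    (F₀ i ⊓ exchangeGraph G F₀).Reachable u v := by
  refine huv.of_forall_adj_reachable fun x y hxy => ?_
  obtain ⟨⟨hxyG, F, hF, hmiss⟩, -⟩ := (fromEdgeSet_adj _).mp hxy
  exact hF₀.reachable_inf_exchangeGraph_of_reflTransGen hF i
    (hF₀.reachable_inf_exchangeGraph_of_missing hF hxyG hmiss i)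

end Exchange

section Counting

variable [DecidableEq ι] {F : ι → SimpleGraph V}

theorem crossingEdges_exchangeGraph_subset_iUnion :
    G.crossingEdges (exchangeGraph G F).connectedComponentMk ⊆
      ⋃ i, (F i).crossingEdges (exchangeGraph G F).connectedComponentMk := by
  rintro e ⟨heG, hcross⟩
  by_contra hnot
  simp only [Set.mem_iUnion, crossingEdges, not_exists] at hnot
  refine hcross (isDiag_map_connectedComponentMk (G := exchangeGraph G F) ?_)
  rw [exchangeGraph, edgeSet_fromEdgeSet]
  exact ⟨⟨heG, F, .refl, fun j hj => hnot j ⟨hj, hcross⟩⟩, G.not_isDiag_of_mem_edgeSet heG⟩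

variable [Finite V] [Fintype ι]

theorem IsMaxForestPacking.ncard_crossingEdges_add_one_le [Nonempty V]
    (hF : IsMaxForestPacking G F) (i : ι) :
    ((F i).crossingEdges (exchangeGraph G F).connectedComponentMk).ncard + 1 ≤
      Nat.card (exchangeGraph G F).ConnectedComponent := by
  set Γ := exchangeGraph G F
  have hsub : (F i).crossingEdges Γ.connectedComponentMk ⊆ (F i).edgeSet \ (F i ⊓ Γ).edgeSet :=
    fun e ⟨heF, hcross⟩ =>
      ⟨heF, fun he => hcross (isDiag_map_connectedComponentMk (edgeSet_mono inf_le_right he))⟩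
  calc _ ≤ ((F i).edgeSet \ (F i ⊓ Γ).edgeSet).ncard + 1 := by
        gcongr
        exact Set.toFinite _
    _ ≤ Nat.card (F i ⊓ Γ).ConnectedComponent :=
        (hF.1.1 i).2.ncard_edgeSet_sdiff_add_one_le inf_le_left
    _ ≤ Nat.card Γ.ConnectedComponent :=
        card_connectedComponent_le_of_reachable fun _ _ => hF.reachable_inf_exchangeGraph i

theorem IsMaxForestPacking.connected_exchangeGraph [Nonempty ι] (hF : IsMaxForestPacking G F)
    (hG : _root_.IsEdgeConnected G (2 * Fintype.card ι)) : (exchangeGraph G F).Connected := by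
  have := hG.1.nonempty
  have := Fintype.ofFinite (exchangeGraph G F).ConnectedComponent
  refine (connected_iff _).mpr ⟨fun u v => ConnectedComponent.exact ?_, ‹_›⟩
  by_contra hne
  have h₁ := hG.mul_card_le_two_mul_ncard_crossingEdges
    (f := (exchangeGraph G F).connectedComponentMk) (fun c => c.exists_rep)
    (Fintype.one_lt_card_iff.mpr ⟨_, _, hne⟩)
  have h₂ := (Set.ncard_le_ncard (crossingEdges_exchangeGraph_subset_iUnion (G := G) (F := F))
    (Set.toFinite _)).trans (Set.ncard_iUnion_le_of_fintype _)
  have h₃ := Finset.sum_le_sum fun i (_ : i ∈ Finset.univ) => hF.ncard_crossingEdges_add_one_le i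
  rw [Finset.sum_add_distrib, Finset.sum_const, Finset.sum_const, Finset.card_univ, smul_eq_mul,
    smul_eq_mul, Nat.card_eq_fintype_card] at h₃
  have := Fintype.card_pos (α := ι)
  -- with `p` components and `k = card ι ≥ 1`:
  -- `2k·p ≤ 2·#crossing G ≤ 2·∑ᵢ #crossing (F i) ≤ 2k·(p - 1)`
  nlinarith

theorem IsMaxForestPacking.isTree (hF : IsMaxForestPacking G F)
    (hΓ : (exchangeGraph G F).Connected) (i : ι) : (F i).IsTree :=
  ⟨(connected_iff _).mpr ⟨fun u v =>
    (hF.reachable_inf_exchangeGraph i (hΓ.preconnected u v)).mono inf_le_left, hΓ.nonempty⟩,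
    (hF.1.1 i).2⟩

end Counting

end SimpleGraph

/-- (Tutte, Nash-Williams) Every `2k`-edge-connected finite simple graph contains `k`
pairwise edge-disjoint spanning trees. -/
theorem hasEdgeDisjointSpanningTrees_of_edgeConnected {V : Type*} [Fintype V]
    (G : SimpleGraph V) (k : ℕ) (hk : 1 ≤ k) (hG : _root_.IsEdgeConnected G (2 * k)) :
    HasEdgeDisjointSpanningTrees G k := by
  have : Nonempty (Fin k) := ⟨⟨0, hk⟩⟩
  obtain ⟨F, hF⟩ := exists_isMaxForestPacking (ι := Fin k) G
  have hΓ := hF.connected_exchangeGraph (by rwa [Fintype.card_fin])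
  exact ⟨F, fun i => ⟨(hF.1.1 i).1, hF.isTree hΓ i⟩, hF.1.2⟩
end

section
/- For every n ≥ 1, the arboricity of the hypercube Q_n equals ⌊n/2⌋ + 1. -/
open SimpleGraph

/-- The `n`-dimensional hypercube graph `Q_n`: vertices are binary vectors of length `n`,
two vertices adjacent iff they differ in exactly one coordinate. -/
def hypercube (n : ℕ) : SimpleGraph (Fin n → Bool) where
  Adj x y := ∃! i, x i ≠ y i
  symm := by
    constructor
    rintro x y ⟨i, hi, hu⟩
    exact ⟨i, hi.symm, fun j hj => hu j hj.symm⟩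
  loopless := by
    constructor
    rintro x ⟨i, hi, -⟩
    exact hi rfl

/-- The arboricity of `G`: the minimum number of edge-disjoint forests (acyclic spanning
subgraphs) into which the edge set of `G` can be decomposed. -/
noncomputable def arboricity {V : Type*} (G : SimpleGraph V) : ℕ :=
  sInf {t | ∃ F : Fin t → SimpleGraph V,
    (∀ i, F i ≤ G ∧ (F i).IsAcyclic) ∧
    (Pairwise fun i j => Disjoint (F i).edgeSet (F j).edgeSet) ∧
    (⋃ i, (F i).edgeSet) = G.edgeSet}

/-!
Lower bound: `Q_n` has `n 2^(n-1)` edges, while a forest on its `2^n` vertices has fewer than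
`2^n` edges, so at least `n/2 + 1` forests are needed.

Upper bound: `Q_{n+1} ≅ K₂ □ Q_n`, and we go up two dimensions at a time. Together with a
decomposition of `Q_{2q}` into `q + 1` forests we carry a root coloring: each vertex chooses one
forest, and no tree of a forest contains two vertices that chose it. In `K₂ □ Q_{2q}`, doubling
each forest and joining the two copies of every vertex that chose it keeps it a forest, which
gives `q + 1` forests for `Q_{2q+1}`. In `K₂ □ Q_{2q+1}` we double these forests without rungs
and add all rungs as one more forest (a matching). Of the two ends of a rung over `(b, x)`, the
one in layer `b` chooses the matching and the other keeps the color of `x`; the vertices of a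
layer that keep a color then all lie in one layer of `Q_{2q+1}`, where distinct roots of a forest
still lie in distinct trees, so the root coloring is restored with `q + 2` forests.
-/

open Finset Function

namespace SimpleGraph

variable {V ι β : Type*}

theorem Reachable.eq_of_forall_adj {G : SimpleGraph V} {f : V → β}
    (hf : ∀ ⦃x y⦄, G.Adj x y → f x = f y) {u v : V} (h : G.Reachable u v) : f u = f v := by
  obtain ⟨p⟩ := h
  induction p with
  | nil => rfl
  | cons hadj _ ih => exact (hf hadj).trans ih

theorem IsAcyclic.card_edgeFinset_add_one_le [Fintype V] [Nonempty V] {G : SimpleGraph V}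
    [Fintype G.edgeSet] (hG : G.IsAcyclic) : #G.edgeFinset + 1 ≤ Fintype.card V := by
  classical
  obtain ⟨T, hGT, -, hT⟩ := connected_top.exists_isTree_le_of_le_of_isAcyclic le_top hG
  calc #G.edgeFinset + 1 ≤ #T.edgeFinset + 1 := by gcongr
    _ = Fintype.card V := hT.card_edgeFinset

/-- Two copies (layers `false` and `true`) of `F`, with a rung joining the two copies of each
vertex of `T`; for `T = univ` this is the prism `K₂ □ F`. -/
def prism (F : SimpleGraph V) (T : Set V) : SimpleGraph (Bool × V) where
  Adj u v := u.1 = v.1 ∧ F.Adj u.2 v.2 ∨ u.1 ≠ v.1 ∧ u.2 = v.2 ∧ u.2 ∈ T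
  symm := by
    constructor
    rintro u v (⟨h, hF⟩ | ⟨h, hx, hT⟩)
    exacts [.inl ⟨h.symm, hF.symm⟩, .inr ⟨Ne.symm h, hx.symm, hx ▸ hT⟩]
  loopless := by
    constructor
    rintro u (⟨-, h⟩ | ⟨h, -⟩)
    exacts [h.ne rfl, h rfl]

section Prism

variable {F F' : SimpleGraph V} {T T' : Set V}

theorem prism_adj {u v : Bool × V} :
    (F.prism T).Adj u v ↔ u.1 = v.1 ∧ F.Adj u.2 v.2 ∨ u.1 ≠ v.1 ∧ u.2 = v.2 ∧ u.2 ∈ T := Iff.rfl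

theorem prism_univ (G : SimpleGraph V) : G.prism Set.univ = ⊤ □ G := by
  ext u v
  simp only [prism_adj, boxProd_adj, top_adj, Set.mem_univ, and_true]
  tauto

theorem prism_sup : F.prism T ⊔ F'.prism T' = (F ⊔ F').prism (T ∪ T') := by
  ext u v
  simp only [sup_adj, prism_adj, Set.mem_union]
  tauto

theorem iSup_prism (F : ι → SimpleGraph V) (T : ι → Set V) :
    ⨆ i, (F i).prism (T i) = (⨆ i, F i).prism (⋃ i, T i) := by
  ext u v
  simp only [iSup_adj, prism_adj, Set.mem_iUnion]
  constructor
  · rintro ⟨i, ⟨h, hF⟩ | ⟨h, hx, hT⟩⟩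
    exacts [.inl ⟨h, i, hF⟩, .inr ⟨h, hx, i, hT⟩]
  · rintro (⟨h, i, hF⟩ | ⟨h, hx, i, hT⟩)
    exacts [⟨i, .inl ⟨h, hF⟩⟩, ⟨i, .inr ⟨h, hx, hT⟩⟩]

theorem Disjoint.prism (hF : Disjoint F F') (hT : Disjoint T T') :
    Disjoint (F.prism T) (F'.prism T') := by
  rw [disjoint_left] at hF ⊢
  rintro u v (⟨h, hadj⟩ | ⟨h, -, hu⟩) (⟨h', hadj'⟩ | ⟨h', -, hu'⟩)
  exacts [hF _ _ hadj hadj', h' h, h h', Set.disjoint_left.mp hT hu hu']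

theorem Reachable.of_prism {u v : Bool × V} (h : (F.prism T).Reachable u v) :
    F.Reachable u.2 v.2 := by
  refine ConnectedComponent.eq.mp (h.eq_of_forall_adj (f := fun w ↦ F.connectedComponentMk w.2) ?_)
  rintro x y (⟨-, hadj⟩ | ⟨-, hxy, -⟩)
  exacts [ConnectedComponent.eq.mpr hadj.reachable, congrArg _ hxy]

theorem Reachable.fst_eq_of_prism_empty {u v : Bool × V} (h : (F.prism ∅).Reachable u v) :
    u.1 = v.1 :=
  h.eq_of_forall_adj fun _ _ (hadj : (F.prism ∅).Adj _ _) ↦ hadj.elim And.left fun h ↦ h.2.2.elim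

theorem isBridge_prism_of_isBridge {x y : V} (hb : F.IsBridge s(x, y))
    (hT : ∀ t ∈ T, ¬(F.deleteEdges {s(x, y)}).Reachable y t) (a : Bool) :
    (F.prism T).IsBridge s((a, x), (a, y)) := by
  rw [isBridge_iff] at hb ⊢
  intro h
  set F' := F.deleteEdges {s(x, y)}
  have key := h.eq_of_forall_adj (f := fun w ↦ w.1 = a ∧ F'.Reachable y w.2) ?_
  · exact hb (eq_iff_iff.mp key |>.mpr ⟨rfl, .rfl⟩).2.symm
  rintro ⟨c, w⟩ ⟨c', w'⟩ hadj
  obtain ⟨⟨rfl, hww'⟩ | ⟨-, rfl, ht⟩, hne⟩ := deleteEdges_adj.mp hadj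
  · refine propext (and_congr_right fun hc ↦ ?_)
    subst hc
    have : F'.Adj w w' := deleteEdges_adj.mpr ⟨hww', fun h ↦ hne <| by
      simpa using congrArg (Sym2.map (Prod.mk c)) (Set.mem_singleton_iff.mp h)⟩
    exact ⟨(·.trans this.reachable), (·.trans this.symm.reachable)⟩
  · simp [hT _ ht]

theorem isBridge_prism_rung (hT : Set.InjOn F.connectedComponentMk T) {x : V} (hx : x ∈ T)
    (a : Bool) : (F.prism T).IsBridge s((a, x), (!a, x)) := by
  classical
  rw [isBridge_iff]
  intro h
  have key := h.eq_of_forall_adj (f := fun w ↦ if F.Reachable x w.2 then w.1 else a) ?_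
  · simp at key
  rintro ⟨c, w⟩ ⟨c', w'⟩ hadj
  obtain ⟨⟨rfl, hww'⟩ | ⟨hc, rfl, ht⟩, hne⟩ := deleteEdges_adj.mp hadj
  · dsimp only at hww' ⊢
    have : F.Reachable x w ↔ F.Reachable x w' :=
      ⟨(·.trans hww'.reachable), (·.trans hww'.symm.reachable)⟩
    simp only [this]
  · dsimp only
    by_cases hxt : F.Reachable x w
    · obtain rfl : x = w := hT hx ht (ConnectedComponent.eq.mpr hxt)
      refine absurd ?_ hne
      cases a <;> cases c <;> cases c' <;> simp_all [Sym2.eq_swap]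
    · simp only [hxt, if_false]

theorem IsAcyclic.prism (hF : F.IsAcyclic) (hT : Set.InjOn F.connectedComponentMk T) :
    (F.prism T).IsAcyclic := by
  rw [isAcyclic_iff_forall_adj_isBridge]
  rintro ⟨a, x⟩ ⟨b, y⟩ (⟨rfl, hxy⟩ | ⟨hab, rfl, hx⟩)
  · have hb := isAcyclic_iff_forall_adj_isBridge.mp hF hxy
    set F' := F.deleteEdges {s(x, y)}
    -- `T` meets at most one of the two halves into which `x — y` cuts its tree.
    by_cases hy : ∀ t ∈ T, ¬F'.Reachable y t
    · exact isBridge_prism_of_isBridge hb hy a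
    push Not at hy
    obtain ⟨t, ht, hyt⟩ := hy
    have hx : ∀ t' ∈ T, ¬F'.Reachable x t' := by
      intro t' ht' hxt'
      have hF'F : F' ≤ F := deleteEdges_le _
      obtain rfl : t = t' := hT ht ht' <| ConnectedComponent.eq.mpr <|
        (hyt.mono hF'F).symm.trans (hxy.symm.reachable.trans (hxt'.mono hF'F))
      exact (isBridge_iff.mp hb) (hxt'.trans hyt.symm)
    rw [Sym2.eq_swap] at hb ⊢
    exact isBridge_prism_of_isBridge hb (by rwa [Sym2.eq_swap]) a
  · obtain rfl : b = !a := Bool.eq_not.mpr hab.symm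
    exact isBridge_prism_rung hT hx a

end Prism

structure IsForestDecomposition (G : SimpleGraph V) (F : ι → SimpleGraph V) : Prop where
  isAcyclic : ∀ i, (F i).IsAcyclic
  pairwise_disjoint : Pairwise (Disjoint on F)
  iSup_eq : ⨆ i, F i = G

/-- `σ x = i` marks `x` as a root of the forest `F i`; no tree of `F i` contains two roots
lying in `S`. -/
def IsRootColoringOn (F : ι → SimpleGraph V) (σ : V → ι) (S : Set V) : Prop :=
  ∀ i, Set.InjOn (F i).connectedComponentMk (S ∩ σ ⁻¹' {i})

variable {W κ : Type*} {G : SimpleGraph V} {F : ι → SimpleGraph V} {σ : V → ι}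

namespace IsForestDecomposition

theorem comp_equiv (h : IsForestDecomposition G F) (e : κ ≃ ι) :
    IsForestDecomposition G (F ∘ e) where
  isAcyclic i := h.isAcyclic (e i)
  pairwise_disjoint _ _ hij := h.pairwise_disjoint (e.injective.ne hij)
  iSup_eq := e.iSup_comp.trans h.iSup_eq

theorem comap {H : SimpleGraph W} {F : ι → SimpleGraph W} (h : IsForestDecomposition H F)
    (e : G ≃g H) : IsForestDecomposition G fun i ↦ (F i).comap e where
  isAcyclic i := (h.isAcyclic i).of_comap e.toEquiv.toEmbedding
  pairwise_disjoint i j hij := by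
    have := h.pairwise_disjoint hij
    rw [onFun, disjoint_left] at this ⊢
    exact fun u v ↦ this (e u) (e v)
  iSup_eq := by
    ext u v
    rw [iSup_adj]
    simp only [comap_adj]
    rw [← iSup_adj, h.iSup_eq, e.map_adj_iff]

theorem card_edgeFinset_add_card_le [Fintype V] [Nonempty V] [Fintype ι] [Fintype G.edgeSet]
    (h : IsForestDecomposition G F) :
    #G.edgeFinset + Fintype.card ι ≤ Fintype.card ι * Fintype.card V := by
  classical
  have hunion : G.edgeFinset = univ.biUnion fun i ↦ (F i).edgeFinset := by
    ext e
    simp [← h.iSup_eq, edgeSet_iSup]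
  have hdisj : (↑(univ : Finset ι) : Set ι).PairwiseDisjoint fun i ↦ (F i).edgeFinset :=
    fun i _ j _ hij ↦ disjoint_edgeFinset.mpr (h.pairwise_disjoint hij)
  calc #G.edgeFinset + Fintype.card ι = ∑ i, (#(F i).edgeFinset + 1) := by
        rw [hunion, card_biUnion hdisj, sum_add_distrib, sum_const, card_univ, smul_eq_mul, mul_one]
    _ ≤ ∑ _i : ι, Fintype.card V := sum_le_sum fun i _ ↦ (h.isAcyclic i).card_edgeFinset_add_one_le
    _ = Fintype.card ι * Fintype.card V := by rw [sum_const, card_univ, smul_eq_mul]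

end IsForestDecomposition

theorem IsRootColoringOn.comap {F : ι → SimpleGraph W} {σ : W → ι} {S : Set W}
    (h : IsRootColoringOn F σ S) (e : V ≃ W) :
    IsRootColoringOn (fun i ↦ (F i).comap e) (σ ∘ e) (e ⁻¹' S) := by
  intro i x hx y hy hxy
  refine e.injective (h i hx hy (ConnectedComponent.eq.mpr ?_))
  exact (ConnectedComponent.eq.mp hxy).map (Embedding.comap e.toEmbedding (F i)).toHom

theorem isForestDecomposition_bot : IsForestDecomposition (⊥ : SimpleGraph V) fun _ : Unit ↦ ⊥ where
  isAcyclic _ := isAcyclic_bot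
  pairwise_disjoint := Subsingleton.pairwise
  iSup_eq := ciSup_const

theorem isRootColoringOn_bot (S : Set V) :
    IsRootColoringOn (fun _ : Unit ↦ (⊥ : SimpleGraph V)) (fun _ ↦ ()) S :=
  fun _ _ _ _ _ h ↦ reachable_bot.mp (ConnectedComponent.eq.mp h)

theorem IsForestDecomposition.prism (h : IsForestDecomposition G F)
    (hσ : IsRootColoringOn F σ Set.univ) :
    IsForestDecomposition (⊤ □ G) fun i ↦ (F i).prism (σ ⁻¹' {i}) where
  isAcyclic i := (h.isAcyclic i).prism (by simpa using hσ i)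
  pairwise_disjoint i j hij :=
    (h.pairwise_disjoint hij).prism ((Set.disjoint_singleton.mpr hij).preimage σ)
  iSup_eq := by
    rw [iSup_prism, h.iSup_eq, ← Set.preimage_iUnion, Set.iUnion_singleton_eq_range,
      Set.range_id', Set.preimage_univ, prism_univ]

theorem IsRootColoringOn.prism (hσ : IsRootColoringOn F σ Set.univ) (b : Bool) :
    IsRootColoringOn (fun i ↦ (F i).prism (σ ⁻¹' {i})) (σ ∘ Prod.snd) {u | u.1 = b} := by
  rintro i u ⟨hu, hui⟩ v ⟨hv, hvi⟩ huv
  refine Prod.ext (hu.trans hv.symm) (hσ i ⟨trivial, hui⟩ ⟨trivial, hvi⟩ ?_)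
  exact ConnectedComponent.eq.mpr (ConnectedComponent.eq.mp huv).of_prism

def layersAndRungs (F : ι → SimpleGraph V) : Option ι → SimpleGraph (Bool × V)
  | none => (⊥ : SimpleGraph V).prism Set.univ
  | some i => (F i).prism ∅

theorem IsForestDecomposition.layersAndRungs (h : IsForestDecomposition G F) :
    IsForestDecomposition (⊤ □ G) (layersAndRungs F) where
  isAcyclic
    | none => isAcyclic_bot.prism fun _ _ _ _ h ↦ reachable_bot.mp (ConnectedComponent.eq.mp h)
    | some i => (h.isAcyclic i).prism (Set.injOn_empty _)
  pairwise_disjoint := by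
    rintro (_ | i) (_ | j) hij
    · exact absurd rfl hij
    · exact disjoint_bot_left.prism (Set.disjoint_empty _)
    · exact disjoint_bot_right.prism (Set.empty_disjoint _)
    · exact (h.pairwise_disjoint (ne_of_apply_ne some hij)).prism (Set.disjoint_empty _)
  iSup_eq := by
    rw [iSup_option]
    simp only [SimpleGraph.layersAndRungs]
    rw [iSup_prism, prism_sup, h.iSup_eq, bot_sup_eq, Set.iUnion_empty, Set.univ_union, prism_univ]

theorem IsRootColoringOn.layersAndRungs {p : V → Bool}
    (hσ : ∀ b, IsRootColoringOn F σ {x | p x = b}) :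
    IsRootColoringOn (layersAndRungs F) (fun u ↦ if p u.2 = u.1 then none else some (σ u.2))
      Set.univ := by
  rintro (_ | i) u ⟨-, hu⟩ v ⟨-, hv⟩ huv <;>
    simp only [Set.mem_preimage, Set.mem_singleton_iff, ite_eq_left_iff, reduceCtorEq, imp_false,
      not_not, Option.ite_none_left_eq_some, Option.some_inj] at hu hv
  · have h2 : u.2 = v.2 := reachable_bot.mp (ConnectedComponent.eq.mp huv).of_prism
    exact Prod.ext (hu.symm.trans (h2 ▸ hv)) h2
  · replace huv := ConnectedComponent.eq.mp huv
    have h1 : u.1 = v.1 := huv.fst_eq_of_prism_empty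
    have hp : p v.2 = p u.2 := (Bool.eq_not.mpr hv.1).trans (h1 ▸ Bool.eq_not.mpr hu.1).symm
    refine Prod.ext h1 (hσ (p u.2) i ⟨rfl, hu.2⟩ ⟨hp, hv.2⟩ ?_)
    exact ConnectedComponent.eq.mpr huv.of_prism

theorem isForestDecomposition_iff {G : SimpleGraph V} {F : ι → SimpleGraph V} :
    IsForestDecomposition G F ↔ (∀ i, F i ≤ G ∧ (F i).IsAcyclic) ∧
      (Pairwise fun i j ↦ Disjoint (F i).edgeSet (F j).edgeSet) ∧
      (⋃ i, (F i).edgeSet) = G.edgeSet := by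
  refine ⟨fun h ↦ ⟨fun i ↦ ⟨h.iSup_eq ▸ le_iSup F i, h.isAcyclic i⟩,
    fun i j hij ↦ disjoint_edgeSet.mpr (h.pairwise_disjoint hij), h.iSup_eq ▸ edgeSet_iSup.symm⟩,
    fun ⟨hF, hdisj, hU⟩ ↦ ⟨fun i ↦ (hF i).2, fun i j hij ↦ disjoint_edgeSet.mp (hdisj hij),
      edgeSet_inj.mp (edgeSet_iSup.trans hU)⟩⟩

end SimpleGraph

theorem arboricity_eq_sInf {V : Type*} (G : SimpleGraph V) :
    arboricity G = sInf {t | ∃ F : Fin t → SimpleGraph V, IsForestDecomposition G F} := by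
  simp only [isForestDecomposition_iff]
  rfl

theorem hypercube_adj_iff {n : ℕ} {x y : Fin n → Bool} :
    (hypercube n).Adj x y ↔ ∃ i, ∀ j, x j ≠ y j ↔ j = i :=
  ⟨fun ⟨i, hi, hu⟩ ↦ ⟨i, fun j ↦ ⟨hu j, fun h ↦ h ▸ hi⟩⟩,
    fun ⟨i, h⟩ ↦ ⟨i, (h i).2 rfl, fun j ↦ (h j).1⟩⟩

def hypercubeSuccIso (n : ℕ) : hypercube (n + 1) ≃g (⊤ : SimpleGraph Bool) □ hypercube n where
  toEquiv := (Fin.consEquiv fun _ => Bool).symm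
  map_rel_iff' {x y} := by
    simp only [boxProd_adj, top_adj, hypercube_adj_iff, Fin.exists_fin_succ, Fin.forall_fin_succ,
      Fin.succ_ne_zero, (Fin.succ_ne_zero _).symm, Fin.succ_inj, funext_iff,
      Fin.consEquiv_symm_apply, Fin.tail, iff_true, iff_false, not_not]
    tauto

theorem hypercube_zero : hypercube 0 = ⊥ := by
  ext x y
  simp [hypercube_adj_iff]

theorem degree_hypercube (n : ℕ) (x : Fin n → Bool) [Fintype ((hypercube n).neighborSet x)] :
    (hypercube n).degree x = n := by
  induction n with
  | zero => simp [hypercube_zero]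
  | succ n ih =>
    classical
    rw [← (hypercubeSuccIso n).degree_eq, degree_boxProd, ih, IsRegularOfDegree.top.degree_eq]
    simp [add_comm]

theorem two_mul_card_edgeFinset_hypercube (n : ℕ) [Fintype (hypercube n).edgeSet] :
    2 * #(hypercube n).edgeFinset = n * 2 ^ n := by
  classical
  calc 2 * #(hypercube n).edgeFinset = ∑ x, (hypercube n).degree x := by
        convert (sum_degrees_eq_twice_card_edges _).symm
    _ = n * 2 ^ n := by simp [degree_hypercube, mul_comm]

theorem exists_isForestDecomposition_isRootColoringOn_hypercube_two_mul (q : ℕ) :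
    ∃ (ι : Type) (_ : Fintype ι) (F : ι → SimpleGraph (Fin (2 * q) → Bool))
      (σ : (Fin (2 * q) → Bool) → ι), Fintype.card ι = q + 1 ∧
      IsForestDecomposition (hypercube (2 * q)) F ∧ IsRootColoringOn F σ Set.univ := by
  induction q with
  | zero =>
    refine ⟨Unit, inferInstance, _, _, rfl, ?_, isRootColoringOn_bot _⟩
    rw [show hypercube (2 * 0) = ⊥ from hypercube_zero]
    exact isForestDecomposition_bot
  | succ q ih =>
    obtain ⟨ι, _, F, σ, hcard, hF, hσ⟩ := ih
    let e₁ := hypercubeSuccIso (2 * q)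
    let e₂ := hypercubeSuccIso (2 * q + 1)
    have hF₁ := (hF.prism hσ).comap e₁
    have hσ₁ (b : Bool) := (hσ.prism b).comap e₁.toEquiv
    exact ⟨Option ι, inferInstance, _, _, by simp [hcard], hF₁.layersAndRungs.comap e₂,
      (IsRootColoringOn.layersAndRungs (p := fun x ↦ (e₁ x).1) hσ₁).comap e₂.toEquiv⟩

theorem exists_isForestDecomposition_hypercube (n : ℕ) :
    ∃ F : Fin (n / 2 + 1) → SimpleGraph (Fin n → Bool), IsForestDecomposition (hypercube n) F := by
  obtain ⟨q, rfl | rfl⟩ := Nat.even_or_odd' n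
  · obtain ⟨ι, _, F, -, hcard, hF, -⟩ :=
      exists_isForestDecomposition_isRootColoringOn_hypercube_two_mul q
    rw [show 2 * q / 2 = q by omega]
    exact ⟨_, hF.comp_equiv (Fintype.equivFinOfCardEq hcard).symm⟩
  · obtain ⟨ι, _, F, σ, hcard, hF, hσ⟩ :=
      exists_isForestDecomposition_isRootColoringOn_hypercube_two_mul q
    rw [show (2 * q + 1) / 2 = q by omega]
    exact ⟨_, ((hF.prism hσ).comap (hypercubeSuccIso _)).comp_equiv
      (Fintype.equivFinOfCardEq hcard).symm⟩

theorem SimpleGraph.IsForestDecomposition.div_two_lt_card_of_hypercube {ι : Type*} [Fintype ι]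
    {n : ℕ} (hn : 1 ≤ n) {F : ι → SimpleGraph (Fin n → Bool)}
    (h : IsForestDecomposition (hypercube n) F) :
    n / 2 < Fintype.card ι := by
  classical
  have hE := two_mul_card_edgeFinset_hypercube n
  have hF := h.card_edgeFinset_add_card_le
  simp only [Fintype.card_pi, Fintype.card_bool, prod_const, card_univ, Fintype.card_fin] at hF
  have hpos : 0 < n * 2 ^ n := by positivity
  have : n < 2 * Fintype.card ι := by nlinarith
  omega

/-- The arboricity of the hypercube `Q_n` equals `⌊n/2⌋ + 1`. -/
theorem arboricity_hypercube (n : ℕ) (hn : 1 ≤ n) :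
    arboricity (hypercube n) = n / 2 + 1 := by
  obtain ⟨F, hF⟩ := exists_isForestDecomposition_hypercube n
  rw [arboricity_eq_sInf]
  refine le_antisymm (Nat.sInf_le ⟨F, hF⟩) (le_csInf ⟨_, F, hF⟩ ?_)
  rintro t ⟨F', hF'⟩
  simpa using hF'.div_two_lt_card_of_hypercube hn
end
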